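/- Let (Ω, F, P) be a probability space, G ⊆ F a sub-σ-algebra, Y : Ω → {0,1} measurable, and T : Ω → ℕ measurable with T ≥ 1 everywhere. Fix t ∈ ℕ and define the linear-ramp pseudo-label C = 0.5 + (Y − 0.5)·(t/T). Let V = E[Y | G], and on the event where 0 < V < 1 define μ₊ = E[Y/T | G]/V and μ₋ = E[(1 − Y)/T | G]/(1 − V). Then almost surely on that event, E[C | G] = 0.5 − (t/2)·μ₋ + V · (t/2)·(μ₊ + μ₋). -/

import Mathlib

open MeasureTheory

/-- **Closed form of the MSE-optimal predictor under the linear ramp.** With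
`C = 0.5 + (Y − 0.5)·(t/T)`, `V = E[Y | G]`, `μ₊ = E[Y/T | G]/V` and
`μ₋ = E[(1 − Y)/T | G]/(1 − V)`, one has, almost surely on the event `{0 < V < 1}`,
`E[C | G] = 0.5 − (t/2)·μ₋ + V·(t/2)·(μ₊ + μ₋)`. -/
theorem condexp_linear_ramp_closed_form
    {Ω : Type*} {m : MeasurableSpace Ω} {mΩ : MeasurableSpace Ω} {μ : Measure Ω} [IsProbabilityMeasure μ]
    (hm : m ≤ mΩ)
    (Y : Ω → ℝ) (hYmeas : Measurable Y) (hY01 : ∀ ω, Y ω = 0 ∨ Y ω = 1)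
    (T : Ω → ℕ) (hTmeas : Measurable T) (hT : ∀ ω, 1 ≤ T ω)
    (t : ℕ)
    (V μplus μminus : Ω → ℝ)
    (hV : V = μ[Y|m])
    (hμplus : ∀ ω, μplus ω = (μ[fun ω' => Y ω' / (T ω' : ℝ) | m]) ω / V ω)
    (hμminus : ∀ ω, μminus ω = (μ[fun ω' => (1 - Y ω') / (T ω' : ℝ) | m]) ω / (1 - V ω)) :
    ∀ᵐ ω ∂μ, 0 < V ω → V ω < 1 →
      (μ[fun ω' => 0.5 + (Y ω' - 0.5) * ((t : ℝ) / (T ω' : ℝ)) | m]) ω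
        = 0.5 - ((t : ℝ) / 2) * μminus ω + V ω * (((t : ℝ) / 2) * (μplus ω + μminus ω)) := by
  have hTR : ∀ ω, (1 : ℝ) ≤ (T ω : ℝ) := fun ω => by exact_mod_cast hT ω
  set f : Ω → ℝ := fun ω => Y ω / (T ω : ℝ) with hf
  set g : Ω → ℝ := fun ω => (1 - Y ω) / (T ω : ℝ) with hg
  have hTne : ∀ ω, (T ω : ℝ) ≠ 0 := fun ω => Nat.cast_ne_zero.mpr (by have := hT ω; omega)
  have hfm : Measurable[mΩ] f := by exact hYmeas.div ((measurable_from_top (f := (Nat.cast : ℕ → ℝ))).comp hTmeas)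
  have hgm : Measurable[mΩ] g := by exact (measurable_const.sub hYmeas).div ((measurable_from_top (f := (Nat.cast : ℕ → ℝ))).comp hTmeas)
  have hbound : ∀ (h : Ω → ℝ), (∀ ω, |h ω| ≤ 1) → Measurable[mΩ] h → Integrable h μ := by
    intro h hb hmeas
    refine ⟨(hmeas.aestronglyMeasurable (μ := μ)), ?_⟩
    exact HasFiniteIntegral.of_bounded (C := 1) (Filter.Eventually.of_forall fun ω => hb ω)
  have hfb : ∀ ω, |f ω| ≤ 1 := by
    intro ω
    rcases hY01 ω with h | h <;> rw [hf] <;> simp only [h] <;>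
      rw [abs_div, abs_of_nonneg (by positivity : (0:ℝ) ≤ (T ω:ℝ))]
    · simp
    · rw [abs_one, div_le_one (by linarith [hTR ω])]; exact hTR ω
  have hgb : ∀ ω, |g ω| ≤ 1 := by
    intro ω
    rcases hY01 ω with h | h <;> rw [hg] <;> simp only [h] <;>
      rw [abs_div, abs_of_nonneg (by positivity : (0:ℝ) ≤ (T ω:ℝ))]
    · rw [show |(1:ℝ) - 0| = 1 by norm_num, div_le_one (by linarith [hTR ω])]; exact hTR ω
    · simp
  have hfi : Integrable f μ := hbound f hfb hfm
  have hgi : Integrable g μ := hbound g hgb hgm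
  -- rewrite the ramp as const + (t/2)•f - (t/2)•g
  have hC : (fun ω' => 0.5 + (Y ω' - 0.5) * ((t : ℝ) / (T ω' : ℝ)))
      = (fun _ => (0.5:ℝ)) + (((t:ℝ)/2) • f + (-((t:ℝ)/2)) • g) := by
    funext ω
    simp only [Pi.add_apply, Pi.smul_apply, smul_eq_mul, hf, hg]
    field_simp
    ring
  have h1 : μ[fun ω' => 0.5 + (Y ω' - 0.5) * ((t : ℝ) / (T ω' : ℝ))|m]
      =ᶠ[ae μ] (fun _ => (0.5:ℝ)) + (((t:ℝ)/2) • μ[f|m] + (-((t:ℝ)/2)) • μ[g|m]) := by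
    rw [hC]
    refine (condExp_add (integrable_const _) ((hfi.smul _).add (hgi.smul _)) m).trans ?_
    rw [condExp_const hm]
    refine Filter.EventuallyEq.add (Filter.EventuallyEq.refl _ _) ?_
    refine (condExp_add (hfi.smul _) (hgi.smul _) m).trans ?_
    exact Filter.EventuallyEq.add (condExp_smul _ _ m) (condExp_smul _ _ m)
  filter_upwards [h1] with ω hω h0 h1'
  rw [hω]
  simp only [Pi.add_apply, Pi.smul_apply, smul_eq_mul]
  rw [hμplus ω, hμminus ω]
  have hV0 : V ω ≠ 0 := ne_of_gt h0
  have hV1 : (1 : ℝ) - V ω ≠ 0 := by linarith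
  field_simp
  ring
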